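/- arXiv:math/0601398 — 2 statements merged into one kernel-verified Lean document; each statement's English description precedes it below -/
import Mathlib

section
/- If p ≤ q ≤ r are integers ≥ 2 with 1/p + 1/q + 1/r < 1, then 1 − 1/p − 1/q − 1/r ≥ 1/42, with equality exactly when (p,q,r) = (2,3,7). -/
theorem hurwitz_237_minimal (p q r : ℕ) (hp : 2 ≤ p) (hpq : p ≤ q) (hqr : q ≤ r)
    (h : (1 / p + 1 / q + 1 / r : ℚ) < 1) :
    (1 : ℚ) - 1 / p - 1 / q - 1 / r ≥ 1 / 42 ∧
      ((1 : ℚ) - 1 / p - 1 / q - 1 / r = 1 / 42 ↔ p = 2 ∧ q = 3 ∧ r = 7) := by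
  have aux : ∀ (n a : ℕ), 0 < n → n ≤ a → (1 / (a : ℚ)) ≤ 1 / (n : ℚ) := by
    intro n a hn hna
    apply one_div_le_one_div_of_le
    · exact_mod_cast hn
    · exact_mod_cast hna
  have hr0 : (0 : ℚ) < 1 / (r : ℚ) := by
    apply one_div_pos.mpr
    exact_mod_cast Nat.lt_of_lt_of_le (by norm_num) (le_trans hp (le_trans hpq hqr))
  rcases Nat.lt_or_ge p 4 with hp4 | hp4
  · interval_cases p
    · -- p = 2
      rcases Nat.lt_or_ge q 5 with hq5 | hq5
      · interval_cases q
        · -- q = 2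
          exfalso
          push_cast at h
          linarith
        · -- q = 3
          rcases Nat.lt_or_ge r 7 with hr7 | hr7
          · -- r ≤ 6 : contradiction
            exfalso
            have h6 := aux r 6 (by omega) (by omega)
            push_cast at h h6
            linarith
          · rcases Nat.lt_or_ge r 8 with hr8 | hr8
            · -- r = 7 : equality
              have : r = 7 := by omega
              subst this
              norm_num
            · -- r ≥ 8
              have h8 := aux 8 r (by norm_num) hr8
              push_cast at h8 ⊢
              constructor
              · linarith
              · constructor
                · intro heq; exfalso; linarith
                · rintro ⟨-, -, h7⟩; omega
        · -- q = 4
          rcases Nat.lt_or_ge r 5 with hr5 | hr5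
          · -- r = 4 : contradiction
            have : r = 4 := by omega
            subst this
            exfalso; push_cast at h; linarith
          · have h5 := aux 5 r (by norm_num) hr5
            push_cast at h5 ⊢
            refine ⟨by linarith, fun heq => by exfalso; linarith, ?_⟩
            rintro ⟨h1x, h2x, h3x⟩; exact absurd h2x (by norm_num)
      · -- q ≥ 5
        have h1 := aux 5 q (by norm_num) hq5
        have h2 := aux 5 r (by norm_num) (le_trans hq5 hqr)
        push_cast at h1 h2 ⊢
        refine ⟨by linarith, fun heq => by exfalso; linarith, ?_⟩
        rintro ⟨h1x, h2x, h3x⟩; omega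
    · -- p = 3
      rcases Nat.lt_or_ge q 4 with hq4 | hq4
      · interval_cases q
        · -- q = 3
          rcases Nat.lt_or_ge r 4 with hr4 | hr4
          · have : r = 3 := by omega
            subst this
            exfalso; push_cast at h; linarith
          · have h4 := aux 4 r (by norm_num) hr4
            push_cast at h4 ⊢
            refine ⟨by linarith, fun heq => by exfalso; linarith, ?_⟩
            rintro ⟨hf, -, -⟩; exact hf.elim
      · -- q ≥ 4
        have h1 := aux 4 q (by norm_num) hq4
        have h2 := aux 4 r (by norm_num) (le_trans hq4 hqr)
        push_cast at h1 h2 ⊢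
        refine ⟨by linarith, fun heq => by exfalso; linarith, ?_⟩
        rintro ⟨h1x, h2x, h3x⟩; omega
  · -- p ≥ 4
    have h1 := aux 4 p (by norm_num) hp4
    have h2 := aux 4 q (by norm_num) (le_trans hp4 hpq)
    have h3 := aux 4 r (by norm_num) (le_trans hp4 (le_trans hpq hqr))
    push_cast at h1 h2 h3 ⊢
    refine ⟨by linarith, fun heq => by exfalso; linarith, ?_⟩
    rintro ⟨h1x, h2x, h3x⟩; omega
end

section
/- More generally, for any k ≥ 3 integers m₁ ≤ ... ≤ m_k each ≥ 2 such that Σ(1 − 1/mᵢ) > 2, one has Σ(1 − 1/mᵢ) − 2 ≥ 1/42. -/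
lemma inv_le_inv_nat {s n : ℕ} (hs : 0 < s) (h : s ≤ n) :
    1 / (n : ℚ) ≤ 1 / (s : ℚ) := by
  apply one_div_le_one_div_of_le
  · exact_mod_cast hs
  · exact_mod_cast h

lemma inv_nonneg_nat (n : ℕ) : (0 : ℚ) ≤ 1 / (n : ℚ) := by positivity

lemma key3 (a b c : ℕ) (ha : 2 ≤ a) (hab : a ≤ b) (hbc : b ≤ c)
    (h : 1/(a:ℚ) + 1/(b:ℚ) + 1/(c:ℚ) < 1) :
    1/(a:ℚ) + 1/(b:ℚ) + 1/(c:ℚ) ≤ 41/42 := by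
  rcases Nat.lt_or_ge a 3 with ha3 | ha3
  · -- a = 2
    have ha2 : a = 2 := by omega
    subst ha2
    push_cast at h ⊢
    rcases Nat.lt_or_ge b 3 with hb3 | hb3
    · -- b = 2
      have hb2 : b = 2 := by omega
      subst hb2
      push_cast at h
      have := inv_nonneg_nat c
      linarith
    rcases Nat.lt_or_ge b 4 with hb4 | hb4
    · -- b = 3
      have hb3' : b = 3 := by omega
      subst hb3'
      push_cast at h ⊢
      have hc7 : 7 ≤ c := by
        by_contra hc
        push_neg at hc
        have h6 := inv_le_inv_nat (by omega : 0 < c) (by omega : c ≤ 6)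
        push_cast at h6
        linarith
      have h7 := inv_le_inv_nat (by norm_num : 0 < 7) hc7
      push_cast at h7
      linarith
    · -- b ≥ 4
      rcases Nat.lt_or_ge c 5 with hc5 | hc5
      · have : b = 4 ∧ c = 4 := by omega
        obtain ⟨rfl, rfl⟩ := this
        norm_num at h
      · have h1 := inv_le_inv_nat (by norm_num : 0 < 4) hb4
        have h2 := inv_le_inv_nat (by norm_num : 0 < 5) hc5
        push_cast at h1 h2
        linarith
  · -- a ≥ 3
    have hb3 : 3 ≤ b := le_trans ha3 hab
    have hc3 : 3 ≤ c := le_trans hb3 hbc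
    rcases Nat.lt_or_ge c 4 with hc4 | hc4
    · have : a = 3 ∧ b = 3 ∧ c = 3 := by omega
      obtain ⟨rfl, rfl, rfl⟩ := this
      norm_num at h
    · have h1 := inv_le_inv_nat (by norm_num : 0 < 3) ha3
      have h2 := inv_le_inv_nat (by norm_num : 0 < 3) hb3
      have h3 := inv_le_inv_nat (by norm_num : 0 < 4) hc4
      push_cast at h1 h2 h3
      linarith

lemma key3' (a b c : ℕ) (ha : 2 ≤ a) (hb : 2 ≤ b) (hc : 2 ≤ c)
    (h : 1/(a:ℚ) + 1/(b:ℚ) + 1/(c:ℚ) < 1) :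
    1/(a:ℚ) + 1/(b:ℚ) + 1/(c:ℚ) ≤ 41/42 := by
  rcases le_total a b with h1 | h1 <;> rcases le_total b c with h2 | h2 <;>
    rcases le_total a c with h3 | h3
  · have := key3 a b c ha h1 h2 (by linarith); linarith
  · have := key3 a b c ha h1 h2 (by linarith); linarith
  · have := key3 a c b ha h3 h2 (by linarith); linarith
  · have := key3 c a b hc h3 h1 (by linarith); linarith
  · have := key3 b a c hb h1 h3 (by linarith); linarith
  · have := key3 b c a hb h2 h3 (by linarith); linarith
  · have := key3 c b a hc h2 h1 (by linarith); linarith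
  · have := key3 c b a hc h2 h1 (by linarith); linarith

theorem hurwitz_signature_bound (k : ℕ) (hk : 3 ≤ k) (m : Fin k → ℕ)
    (hm : ∀ i, 2 ≤ m i)
    (hS : (2 : ℚ) < ∑ i, (1 - 1 / (m i : ℚ))) :
    (∑ i, (1 - 1 / (m i : ℚ))) - 2 ≥ 1 / 42 := by
  have hhalf : ∀ i, 1 / (m i : ℚ) ≤ 1/2 := fun i => by
    have := inv_le_inv_nat (by norm_num : 0 < 2) (hm i)
    push_cast at this
    exact this
  obtain hk3 | hk4 | hk5 : k = 3 ∨ k = 4 ∨ 5 ≤ k := by omega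
  · subst hk3
    rw [Fin.sum_univ_three] at hS ⊢
    have h := key3' (m 0) (m 1) (m 2) (hm 0) (hm 1) (hm 2) (by linarith)
    linarith
  · subst hk4
    rw [Fin.sum_univ_four] at hS ⊢
    have b0 := hhalf 0; have b1 := hhalf 1; have b2 := hhalf 2; have b3 := hhalf 3
    have H : 3 ≤ m 0 ∨ 3 ≤ m 1 ∨ 3 ≤ m 2 ∨ 3 ≤ m 3 := by
      by_contra hc
      push_neg at hc
      obtain ⟨c0, c1, c2, c3⟩ := hc
      have e0 : m 0 = 2 := by have := hm 0; omega
      have e1 : m 1 = 2 := by have := hm 1; omega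
      have e2 : m 2 = 2 := by have := hm 2; omega
      have e3 : m 3 = 2 := by have := hm 3; omega
      rw [e0, e1, e2, e3] at hS
      norm_num at hS
    rcases H with h | h | h | h <;>
      · have ht := inv_le_inv_nat (by norm_num : 0 < 3) h
        push_cast at ht
        linarith
  · have hterm : ∀ i ∈ Finset.univ, (1:ℚ)/2 ≤ 1 - 1/(m i : ℚ) := fun i _ => by
      have := hhalf i; linarith
    have hsum := Finset.sum_le_sum hterm
    rw [Finset.sum_const, Finset.card_univ, Fintype.card_fin] at hsum
    have hk5' : (5:ℚ) ≤ (k:ℚ) := by exact_mod_cast hk5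
    have hks : (k:ℚ) * (1/2) ≤ ∑ i, (1 - 1/(m i : ℚ)) := by
      simpa [nsmul_eq_mul] using hsum
    linarith
end
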